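/- Let n ≥ 2 and let T be a nonempty subset of the extended conjugacy class C(B_k) in S_n (permutations that are products of exactly k disjoint transpositions). Suppose T is semi-connected ({1, …, n} forms a single orbit under the subgroup generated by T) and split (the supports of any two distinct elements of T intersect in at most one point). Then the subgroup generated by T equals S_n if k is odd, and equals the alternating group A_n if k is even. -/

import Mathlib

/-! If `g, h ∈ T` both move a point `a`, splitness forces their supports to meet only in `a`, and
then `h g h g` is the 3-cycle on `a, g a, h a`. The graph `x — g x` (`g ∈ T`) is connected, and
conjugating these 3-cycles by one another along paths produces every 3-cycle, so `⟨T⟩ ⊇ A_n`.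
Every element of `T` has sign `(-1)^k`, which decides between `A_n` and `S_n`. -/

open Equiv Equiv.Perm Relation

namespace Equiv.Perm

variable {α : Type*}

theorem reflTransGen_apply_of_mem_closure {T : Set (Perm α)} (hT : ∀ g ∈ T, g⁻¹ ∈ T)
    {φ : Perm α} (hφ : φ ∈ Subgroup.closure T) (x : α) :
    ReflTransGen (fun x y => ∃ g ∈ T, g x = y) x (φ x) := by
  induction hφ using Subgroup.closure_induction'' generalizing x with
  | mem g hg => exact .single ⟨g, hg, rfl⟩
  | inv_mem g hg => exact .single ⟨g⁻¹, hT g hg, rfl⟩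
  | one => exact .refl
  | mul p q _ _ ihp ihq => exact (ihq x).trans (ihp (q x))

variable [DecidableEq α] {K : Subgroup (Perm α)} {a b c : α}

theorem swap_mul_swap_rotate (hac : a ≠ c) (hbc : b ≠ c) :
    swap a b * swap a c = swap b c * swap b a := by
  ext x
  simp only [Perm.mul_apply, swap_apply_def]
  grind

theorem swap_mul_swap_mem_symm (h : swap a b * swap a c ∈ K) : swap a c * swap a b ∈ K := by
  simpa only [mul_inv_rev, swap_inv] using K.inv_mem h

theorem swap_mul_swap_mem_conj {π : Perm α} (hπ : π ∈ K) (h : swap a b * swap a c ∈ K) :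
    swap (π a) (π b) * swap (π a) (π c) ∈ K := by
  rw [swap_apply_apply, swap_apply_apply]
  convert K.mul_mem (K.mul_mem hπ h) (K.inv_mem hπ) using 1
  group

theorem mul_mul_mul_eq_swap_mul_swap_of_involutive [Fintype α] {g h : Perm α}
    (hg : Function.Involutive g) (hh : Function.Involutive h)
    (hgh : (g.support ∩ h.support).card ≤ 1)
    (hga : g a ≠ a) (hha : h a ≠ a) :
    h * g * h * g = swap a (g a) * swap a (h a) := by
  have hone : ∀ x, g x ≠ x → h x ≠ x → x = a := fun x hgx hhx =>
    Finset.card_le_one.mp hgh x (by simp [hgx, hhx]) a (by simp [hga, hha])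
  have hg_ha : g (h a) = h a := by_contra fun hc => hha (hone _ hc (by rwa [hh a, ne_comm]))
  have hh_ga : h (g a) = g a := by_contra fun hb => hga (hone _ (by rwa [hg a, ne_comm]) hb)
  have hga_ne_ha : g a ≠ h a := fun e =>
    hga (hone _ (by rwa [hg a, ne_comm]) (by rwa [e, hh a, ne_comm]))
  ext x
  simp only [Perm.mul_apply]
  rcases eq_or_ne x a with rfl | hxa
  · simp [swap_apply_of_ne_of_ne hha hga_ne_ha.symm, hh_ga, hg x]
  rcases eq_or_ne x (g a) with rfl | hxb
  · simp [swap_apply_of_ne_of_ne hga hga_ne_ha, hg a, hg_ha, hh a]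
  rcases eq_or_ne x (h a) with rfl | hxc
  · simp [hg_ha, hh a, hh_ga]
  rw [swap_apply_of_ne_of_ne hxa hxc, swap_apply_of_ne_of_ne hxa hxb]
  by_cases hgx : g x = x
  · by_cases hhx : h x = x
    · rw [hgx, hhx, hgx, hhx]
    have hghx : g (h x) = h x := by_contra fun hg' =>
      hxc (by rw [← hone _ hg' (by rwa [hh x, ne_comm]), hh x])
    rw [hgx, hghx, hh x]
  have hhx : h x = x := by_contra (hxa ∘ hone x hgx)
  have hhgx : h (g x) = g x := by_contra fun hh' =>
    hxb (by rw [← hone _ (by rwa [hg x, ne_comm]) hh', hg x])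
  rw [hhgx, hg x, hhx]

/-- With `A = r` this spreads the 3-cycles on cherries `a — b — d` to all 3-cycles through an edge
`a — b`; with `A = ⊤` it then spreads those to all 3-cycles. -/
theorem swap_mul_swap_mem_of_reflTransGen {r A : α → α → Prop}
    (hA : ∀ b d, r b d → b ≠ d → A d b)
    (hstep : ∀ b a d, A b a → r b d → a ≠ b → d ≠ b → a ≠ d → swap b a * swap b d ∈ K)
    (hrbc : ReflTransGen r b c) (hba : A b a) (hab : a ≠ b) (hac : a ≠ c) (hbc : b ≠ c) :
    swap b a * swap b c ∈ K := by
  induction hrbc using ReflTransGen.head_induction_on generalizing a with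
  | refl => exact absurd rfl hbc
  | @head b d hbd _ ih =>
    rcases eq_or_ne d c with rfl | hdc
    · exact hstep b a d hba hbd hab hbc.symm hac
    rcases eq_or_ne d b with rfl | hdb
    · exact ih hba hab hac hbc
    have hdbc : swap d b * swap d c ∈ K := ih (hA b d hbd hdb.symm) hdb.symm hbc hdc
    rcases eq_or_ne a d with rfl | had
    · rw [swap_mul_swap_rotate hac hbc] at hdbc
      exact swap_mul_swap_mem_symm hdbc
    -- conjugate the 3-cycle on `{b, a, d}` by the one on `{b, c, d}` sending `b ↦ c ↦ d ↦ b`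
    have hcab := swap_mul_swap_mem_conj (swap_mul_swap_mem_symm hdbc)
      (hstep b a d hba hbd hab hdb had)
    simp only [Perm.mul_apply, swap_apply_left, swap_apply_right,
      swap_apply_of_ne_of_ne had hab, swap_apply_of_ne_of_ne had hac,
      swap_apply_of_ne_of_ne hdb.symm hbc] at hcab
    rw [swap_mul_swap_rotate hbc.symm hab, swap_mul_swap_rotate hac hbc] at hcab
    exact swap_mul_swap_mem_symm hcab

variable [Fintype α]

theorem alternatingGroup_le_of_swap_mul_swap_mem
    (h : ∀ a b c : α, a ≠ b → a ≠ c → b ≠ c → swap a b * swap a c ∈ K) :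
    alternatingGroup α ≤ K := by
  rw [← closure_three_cycles_eq_alternating, Subgroup.closure_le]
  intro σ hσ
  obtain ⟨a, ha⟩ : σ.support.Nonempty := by
    rw [← Finset.card_pos, (hσ : σ.IsThreeCycle).card_support]
    norm_num
  have hnd := hσ.nodup_iff_mem_support.mpr ha
  rw [SetLike.mem_coe, hσ.eq_swap_mul_swap_iff_mem_support.mpr ha, swap_comm]
  exact h _ _ _ (by grind) (by grind) (by grind)

theorem alternatingGroup_le_of_reflTransGen {r : α → α → Prop} (hr : ∀ x y, r x y → r y x)
    (hconn : ∀ x y, ReflTransGen r x y)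
    (hcherry : ∀ b a d, r b a → r b d → a ≠ b → d ≠ b → a ≠ d → swap b a * swap b d ∈ K) :
    alternatingGroup α ≤ K := by
  have hedge : ∀ b a c, r b a → a ≠ b → a ≠ c → b ≠ c → swap b a * swap b c ∈ K :=
    fun b a c hba => swap_mul_swap_mem_of_reflTransGen (fun b d hbd _ => hr b d hbd) hcherry
      (hconn b c) hba
  refine alternatingGroup_le_of_swap_mul_swap_mem fun b a c hba hbc hac =>
    swap_mul_swap_mem_of_reflTransGen (A := fun _ _ => True) (fun _ _ _ _ => trivial)
      (fun b a d _ hbd hab hdb had =>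
        swap_mul_swap_mem_symm (hedge b d a hbd hdb had.symm hab.symm))
      (hconn b c) trivial hba.symm hac hbc

theorem eq_top_of_alternatingGroup_le {g : Perm α} (hA : alternatingGroup α ≤ K) (hg : g ∈ K)
    (hsg : sign g = -1) : K = ⊤ := by
  refine eq_top_iff.mpr fun σ _ => ?_
  rcases Int.units_eq_one_or (sign σ) with hσ | hσ
  · exact hA (mem_alternatingGroup.mpr hσ)
  · exact (K.mul_mem_cancel_right hg).mp (hA (by simp [mem_alternatingGroup, hσ, hsg]))

theorem involutive_of_cycleType_eq_replicate_two {σ : Perm α} {k : ℕ}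
    (h : σ.cycleType = Multiset.replicate k 2) : Function.Involutive σ := by
  have hσ : σ ^ 2 = 1 := orderOf_dvd_iff_pow_eq_one.mp <| by
    rw [← lcm_cycleType, h, Multiset.lcm_dvd]
    exact fun b hb => (Multiset.eq_of_mem_replicate hb).dvd
  exact fun x => by rw [← Perm.mul_apply, ← sq, hσ, one_apply]

theorem sign_of_cycleType_eq_replicate_two {σ : Perm α} {k : ℕ}
    (h : σ.cycleType = Multiset.replicate k 2) : sign σ = (-1) ^ k := by
  rw [sign_of_cycleType, h, Multiset.sum_replicate, Multiset.card_replicate, smul_eq_mul,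
    pow_add, pow_mul]
  norm_num

end Equiv.Perm

theorem stmt_9_general (n k : ℕ) (T : Set (Equiv.Perm (Fin n))) (hne : T.Nonempty)
    (htype : ∀ g ∈ T, g.cycleType = Multiset.replicate k 2)
    (hconn : ∀ x y : Fin n, ∃ g ∈ Subgroup.closure T, g x = y)
    (hsplit : ∀ g ∈ T, ∀ h ∈ T, g ≠ h → (g.support ∩ h.support).card ≤ 1) :
    (Odd k → Subgroup.closure T = (⊤ : Subgroup (Equiv.Perm (Fin n)))) ∧
    (Even k → Subgroup.closure T = alternatingGroup (Fin n)) := by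
  have hinv g (hg : g ∈ T) : Function.Involutive g :=
    involutive_of_cycleType_eq_replicate_two (htype g hg)
  have hsign g (hg : g ∈ T) : sign g = (-1) ^ k := sign_of_cycleType_eq_replicate_two (htype g hg)
  have hA : alternatingGroup (Fin n) ≤ Subgroup.closure T := by
    refine alternatingGroup_le_of_reflTransGen (r := fun x y => ∃ g ∈ T, g x = y) ?_ ?_ ?_
    · rintro x _ ⟨g, hg, rfl⟩
      exact ⟨g, hg, hinv g hg x⟩
    · intro x y
      obtain ⟨φ, hφ, rfl⟩ := hconn x y
      refine reflTransGen_apply_of_mem_closure (fun g hg => ?_) hφ x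
      rwa [inv_eq_of_mul_eq_one_right (Perm.ext (hinv g hg))]
    · rintro b _ _ ⟨g, hg, rfl⟩ ⟨h, hh, rfl⟩ hgb hhb hgh
      have hsupp := hsplit g hg h hh fun e => hgh (by rw [e])
      rw [← mul_mul_mul_eq_swap_mul_swap_of_involutive (hinv g hg) (hinv h hh) hsupp hgb hhb]
      have hg' := Subgroup.subset_closure hg
      have hh' := Subgroup.subset_closure hh
      exact mul_mem (mul_mem (mul_mem hh' hg') hh') hg'
  refine ⟨fun hk => ?_, fun hk => ?_⟩
  · obtain ⟨g, hg⟩ := hne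
    exact eq_top_of_alternatingGroup_le hA (Subgroup.subset_closure hg)
      (by rw [hsign g hg, hk.neg_one_pow])
  · refine le_antisymm ((Subgroup.closure_le _).mpr fun g hg => ?_) hA
    rw [SetLike.mem_coe, mem_alternatingGroup, hsign g hg, hk.neg_one_pow]

/-- Let `n ≥ 2` and `T` a nonempty set of permutations of cycle type
`B_k` (`k` disjoint transpositions). If `T` is semi-connected (`{1,…,n}` is a
single orbit under `⟨T⟩`) and split (supports of distinct elements meet in at
most one point), then `⟨T⟩ = S_n` if `k` is odd and `⟨T⟩ = A_n` if `k` is even. -/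
theorem stmt_9 (n k : ℕ) (hn : 2 ≤ n) (T : Set (Equiv.Perm (Fin n))) (hne : T.Nonempty)
    (htype : ∀ g ∈ T, g.cycleType = Multiset.replicate k 2)
    (hconn : ∀ x y : Fin n, ∃ g ∈ Subgroup.closure T, g x = y)
    (hsplit : ∀ g ∈ T, ∀ h ∈ T, g ≠ h → (g.support ∩ h.support).card ≤ 1) :
    (Odd k → Subgroup.closure T = (⊤ : Subgroup (Equiv.Perm (Fin n)))) ∧
    (Even k → Subgroup.closure T = alternatingGroup (Fin n)) :=
  stmt_9_general n k T hne htype hconn hsplit
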